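/- Let f : [n]^k → [n]^k × {±1} be monotone (i.e., f(a)_{[k]} ⪯ f(b)_{[k]} coordinatewise and f(a)_{k+1} ≤ f(b)_{k+1} whenever a ⪯ b). Define g : [n]^k → [n]^k × {±1} by g(x)_{k+1} = f(x)_{k+1} and g(x)_i = x_i + sgn(f(x)_i − x_i) for i ∈ [k]. Then g is monotone, g satisfies |g(x)_i − x_i| ≤ 1 for all i ∈ [k], and a point x ∈ [n]^k satisfies (g(x)_{[k]} ⪰ x and g(x)_{k+1} = +1) or (g(x)_{[k]} ⪯ x and g(x)_{k+1} = −1) if and only if x satisfies the same condition for f. -/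
import Mathlib


/-- Symbols of the partial-information alphabet: −1, 0, 1, ≤, ≥, ◇. -/
inductive PISym : Type where
  | neg | zero | pos | sle | sge | dia
deriving DecidableEq

/-- Points of the `k`-dimensional grid, as integer vectors. -/
abbrev Pt (k : ℕ) := Fin k → ℤ

/-- `x ∈ [n]^k`. -/
def inGrid (n k : ℕ) (x : Pt k) : Prop := ∀ i, 1 ≤ x i ∧ x i ≤ (n : ℤ)

/-- The `i`-th standard unit vector. -/
def eVec (k : ℕ) (i : Fin k) : Pt k := fun j => if j = i then 1 else 0

/-- A slice of `[n]^k`: `none` marks a free coordinate. -/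
abbrev Slice (k : ℕ) := Fin k → Option ℤ

def fullSlice (k : ℕ) : Slice k := fun _ => none

def validSlice (n : ℕ) {k : ℕ} (s : Slice k) : Prop :=
  ∀ i v, s i = some v → 1 ≤ v ∧ v ≤ (n : ℤ)

def inSlice {k : ℕ} (s : Slice k) (x : Pt k) : Prop :=
  ∀ i v, s i = some v → x i = v

/-- Monotone partial-information function (Definition 2.4). -/
def MonoPI (n k : ℕ) (p1 : Pt k → Fin k → PISym) (p2 : Pt k → PISym) : Prop :=
  (∀ x, inGrid n k x → p2 x = PISym.pos ∨ p2 x = PISym.neg ∨ p2 x = PISym.dia) ∧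
  (∀ x y, inGrid n k x → inGrid n k y → ∀ i : Fin k,
    (p1 x i = PISym.pos → x ≤ y → y i = x i →
      p1 y i = PISym.pos ∧
        (y i < (n : ℤ) → p1 (y + eVec k i) i ∈ ({PISym.pos, PISym.zero, PISym.sge} : Set PISym))) ∧
    (p1 x i = PISym.neg → y ≤ x → y i = x i →
      p1 y i = PISym.neg ∧
        (1 < y i → p1 (y - eVec k i) i ∈ ({PISym.neg, PISym.zero, PISym.sle} : Set PISym))) ∧
    (p1 x i = PISym.zero → y ≤ x → y i = x i →
      p1 y i ∈ ({PISym.zero, PISym.neg, PISym.sle} : Set PISym)) ∧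
    (p1 x i = PISym.zero → x ≤ y → y i = x i →
      p1 y i ∈ ({PISym.zero, PISym.pos, PISym.sge} : Set PISym)) ∧
    (p1 x i = PISym.sle → y ≤ x → y i = x i → p1 y i ∈ ({PISym.neg, PISym.sle} : Set PISym)) ∧
    (p1 x i = PISym.sge → x ≤ y → y i = x i → p1 y i ∈ ({PISym.pos, PISym.sge} : Set PISym))) ∧
  (∀ x, inGrid n k x → ∀ i : Fin k,
    (x i = 1 → p1 x i ∈ ({PISym.zero, PISym.pos, PISym.sge} : Set PISym)) ∧
    (x i = (n : ℤ) → p1 x i ∈ ({PISym.zero, PISym.neg, PISym.sle} : Set PISym))) ∧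
  (∀ x y, inGrid n k x → inGrid n k y → x ≤ y →
    (p2 x = PISym.pos → p2 y = PISym.pos) ∧ (p2 y = PISym.neg → p2 x = PISym.neg))

/-- Postfixed points of a PI function on a slice. -/
def Post (n k : ℕ) (p1 : Pt k → Fin k → PISym) (s : Slice k) : Set (Pt k) :=
  {x | inGrid n k x ∧ inSlice s x ∧
       ∀ i, s i = none → p1 x i ∈ ({PISym.pos, PISym.zero, PISym.sge} : Set PISym)}

/-- Prefixed points of a PI function on a slice. -/
def Pre (n k : ℕ) (p1 : Pt k → Fin k → PISym) (s : Slice k) : Set (Pt k) :=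
  {x | inGrid n k x ∧ inSlice s x ∧
       ∀ i, s i = none → p1 x i ∈ ({PISym.neg, PISym.zero, PISym.sle} : Set PISym)}

/-- Safe PI functions (Definition 2.8). -/
def SafePI (n k : ℕ) (p1 : Pt k → Fin k → PISym) (p2 : Pt k → PISym) : Prop :=
  MonoPI n k p1 p2 ∧
  ∀ s : Slice k, validSlice n s →
    (∀ J, IsGreatest (Post n k p1 s) J →
      ∀ x, inGrid n k x → inSlice s x → x ≤ J → x ≠ J →
        (∀ i, s i = none → x i < J i →
          p1 x i ∈ ({PISym.neg, PISym.zero, PISym.pos} : Set PISym)) ∧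
        (∃ i, s i = none ∧ x i < J i ∧ p1 x i = PISym.pos)) ∧
    (∀ M, IsLeast (Pre n k p1 s) M →
      ∀ x, inGrid n k x → inSlice s x → M ≤ x → x ≠ M →
        (∀ i, s i = none → M i < x i →
          p1 x i ∈ ({PISym.neg, PISym.zero, PISym.pos} : Set PISym)) ∧
        (∃ i, s i = none ∧ M i < x i ∧ p1 x i = PISym.neg))

/-- `x^{−i}` for `i ∈ [k]`. -/
def dminus {k : ℕ} (i : Fin k) (x : Pt k) : Pt k :=
  fun j => if j ≠ i ∧ 1 < x j then x j - 1 else x j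

/-- `x^{−(k+1)}`. -/
def dminusAll {k : ℕ} (x : Pt k) : Pt k :=
  fun j => if 1 < x j then x j - 1 else x j

/-- `x^{+i}` for `i ∈ [k]`. -/
def dplus (n : ℕ) {k : ℕ} (i : Fin k) (x : Pt k) : Pt k :=
  fun j => if j ≠ i ∧ x j < (n : ℤ) then x j + 1 else x j

/-- `x^{+(k+1)}`. -/
def dplusAll (n : ℕ) {k : ℕ} (x : Pt k) : Pt k :=
  fun j => if x j < (n : ℤ) then x j + 1 else x j

def IntPlus {k : ℕ} (p1 : Pt k → Fin k → PISym) (i : Fin k) : Set (Pt k) :=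
  {x | p1 (dminus i x) i = PISym.pos}

def IntPlusLast {k : ℕ} (p1 : Pt k → Fin k → PISym) (p2 : Pt k → PISym) : Set (Pt k) :=
  {x | p2 (dminusAll x) = PISym.pos ∨
    ∃ i, p1 (dminus i x) i ∈ ({PISym.pos, PISym.zero, PISym.sge} : Set PISym) ∧
         p2 (dminus i x) = PISym.pos}

def IntMinus (n : ℕ) {k : ℕ} (p1 : Pt k → Fin k → PISym) (i : Fin k) : Set (Pt k) :=
  {x | p1 (dplus n i x) i = PISym.neg}

def IntMinusLast (n : ℕ) {k : ℕ} (p1 : Pt k → Fin k → PISym) (p2 : Pt k → PISym) : Set (Pt k) :=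
  {x | p2 (dplusAll n x) = PISym.neg ∨
    ∃ i, p1 (dplus n i x) i ∈ ({PISym.neg, PISym.zero, PISym.sle} : Set PISym) ∧
         p2 (dplus n i x) = PISym.neg}

/-- `Cand⁺(p)` relative to `J = J(p)` and `M = M(p)`. -/
def CandPlus (n k : ℕ) (p1 : Pt k → Fin k → PISym) (p2 : Pt k → PISym) (J M : Pt k) :
    Set (Pt k) :=
  {x | inGrid n k x ∧ J ≤ x ∧ x ≤ M ∧
    (∀ i, p1 x i ≠ PISym.neg ∧ x ∉ IntPlus p1 i) ∧
    p2 x ≠ PISym.neg ∧ x ∉ IntPlusLast p1 p2}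

/-- `Cand⁻(p)` relative to `J = J(p)` and `M = M(p)`. -/
def CandMinus (n k : ℕ) (p1 : Pt k → Fin k → PISym) (p2 : Pt k → PISym) (J M : Pt k) :
    Set (Pt k) :=
  {x | inGrid n k x ∧ J ≤ x ∧ x ≤ M ∧
    (∀ i, p1 x i ≠ PISym.pos ∧ x ∉ IntMinus n p1 i) ∧
    p2 x ≠ PISym.pos ∧ x ∉ IntMinusLast n p1 p2}

/-- The information partial order on symbols: `symDom a b` means `a ⇒ b`. -/
def symDom (a b : PISym) : Prop :=
  b = PISym.dia ∨ a = b ∨ (a = PISym.pos ∧ b = PISym.sge) ∨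
  (a = PISym.zero ∧ (b = PISym.sge ∨ b = PISym.sle)) ∨ (a = PISym.neg ∧ b = PISym.sle)

/-- `p ⇒ p'`: `p` dominates (is more informative than) `p'`. -/
def PIdom (n k : ℕ) (p1 : Pt k → Fin k → PISym) (p2 : Pt k → PISym)
    (q1 : Pt k → Fin k → PISym) (q2 : Pt k → PISym) : Prop :=
  ∀ x, inGrid n k x → (∀ i, symDom (p1 x i) (q1 x i)) ∧ symDom (p2 x) (q2 x)

/-- A sign value `a ∈ {−1,0,1}` is consistent with a symbol `b`. -/
def consS (a : ℤ) (b : PISym) : Prop :=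
  match b with
  | PISym.dia => True
  | PISym.pos => a = 1
  | PISym.neg => a = -1
  | PISym.zero => a = 0
  | PISym.sge => a = 0 ∨ a = 1
  | PISym.sle => a = -1 ∨ a = 0

/-- A sign function `f` is consistent with the PI function `p` (i.e., `f ⇒ p`). -/
def SignCons (n k : ℕ) (f1 : Pt k → Pt k) (f2 : Pt k → ℤ)
    (p1 : Pt k → Fin k → PISym) (p2 : Pt k → PISym) : Prop :=
  ∀ x, inGrid n k x → (∀ i, consS (f1 x i) (p1 x i)) ∧ consS (f2 x) (p2 x)

/-- Monotone sign function: `x ↦ (x + f1 x, f2 x)` is well defined and monotone. -/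
def MonoSign (n k : ℕ) (f1 : Pt k → Pt k) (f2 : Pt k → ℤ) : Prop :=
  (∀ x, inGrid n k x →
    (∀ i, f1 x i = -1 ∨ f1 x i = 0 ∨ f1 x i = 1) ∧ (f2 x = 1 ∨ f2 x = -1)) ∧
  (∀ x, inGrid n k x → inGrid n k (x + f1 x)) ∧
  (∀ a b, inGrid n k a → inGrid n k b → a ≤ b → a + f1 a ≤ b + f1 b ∧ f2 a ≤ f2 b)

def PostF (n k : ℕ) (f1 : Pt k → Pt k) (s : Slice k) : Set (Pt k) :=
  {x | inGrid n k x ∧ inSlice s x ∧ ∀ i, s i = none → 0 ≤ f1 x i}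

def PreF (n k : ℕ) (f1 : Pt k → Pt k) (s : Slice k) : Set (Pt k) :=
  {x | inGrid n k x ∧ inSlice s x ∧ ∀ i, s i = none → f1 x i ≤ 0}

/-- Safe sign functions (conditions (1') and (2') of Definition 2.8). -/
def SafeSign (n k : ℕ) (f1 : Pt k → Pt k) (f2 : Pt k → ℤ) : Prop :=
  MonoSign n k f1 f2 ∧
  ∀ s : Slice k, validSlice n s →
    (∀ J, IsGreatest (PostF n k f1 s) J →
      ∀ x, inGrid n k x → inSlice s x → x ≤ J → x ≠ J →
        ∃ i, s i = none ∧ x i < J i ∧ f1 x i = 1) ∧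
    (∀ M, IsLeast (PreF n k f1 s) M →
      ∀ x, inGrid n k x → inSlice s x → M ≤ x → x ≠ M →
        ∃ i, s i = none ∧ M i < x i ∧ f1 x i = -1)

/-- The revealed solutions of a PI function. -/
def SolPI (n k : ℕ) (p1 : Pt k → Fin k → PISym) (p2 : Pt k → PISym) : Set (Pt k) :=
  {x | inGrid n k x ∧
    (((∀ i, p1 x i ∈ ({PISym.pos, PISym.zero, PISym.sge} : Set PISym)) ∧ p2 x = PISym.pos) ∨
     ((∀ i, p1 x i ∈ ({PISym.neg, PISym.zero, PISym.sle} : Set PISym)) ∧ p2 x = PISym.neg))}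

/-- `x ≪_s y` : `x ⪯ y` with strict inequality in every free coordinate of `s`. -/
def lls {k : ℕ} (s : Slice k) (x y : Pt k) : Prop :=
  x ≤ y ∧ ∀ i, s i = none → x i < y i

/-- `s` is a slice witnessing `ŝ(x,p) ≠ nil`: `x ∈ L_s` and `x ≪_s J_s(p)`. -/
def HasSlice (n k : ℕ) (p1 : Pt k → Fin k → PISym) (x : Pt k) (s : Slice k) : Prop :=
  validSlice n s ∧ inSlice s x ∧ ∃ J, IsGreatest (Post n k p1 s) J ∧ lls s x J

/-- `s = ŝ(x,p)`: `s` is the maximal slice with `x ∈ L_s` and `x ≪_s J_s(p)`. -/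
def MaxSlice (n k : ℕ) (p1 : Pt k → Fin k → PISym) (x : Pt k) (s : Slice k) : Prop :=
  HasSlice n k p1 x s ∧
  ∀ s', HasSlice n k p1 x s' → ∀ i, s' i = none → s i = none

/-- Observation 2.1: rounding a monotone function to a simple one preserves
monotonicity, has steps of size at most 1, and preserves Tarski* solutions. -/
theorem stmt0 (n k : ℕ) (hn : 1 ≤ n)
    (f1 : Pt k → Pt k) (f2 : Pt k → ℤ)
    (hmap : ∀ x, inGrid n k x → inGrid n k (f1 x) ∧ (f2 x = 1 ∨ f2 x = -1))
    (hmono : ∀ a b, inGrid n k a → inGrid n k b → a ≤ b → f1 a ≤ f1 b ∧ f2 a ≤ f2 b) :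
    let g1 : Pt k → Pt k := fun x i => x i + (f1 x i - x i).sign
    (∀ x, inGrid n k x → inGrid n k (g1 x)) ∧
    (∀ a b, inGrid n k a → inGrid n k b → a ≤ b → g1 a ≤ g1 b ∧ f2 a ≤ f2 b) ∧
    (∀ x, inGrid n k x → ∀ i, |g1 x i - x i| ≤ 1) ∧
    (∀ x, inGrid n k x →
      (((x ≤ g1 x ∧ f2 x = 1) ∨ (g1 x ≤ x ∧ f2 x = -1)) ↔
       ((x ≤ f1 x ∧ f2 x = 1) ∨ (f1 x ≤ x ∧ f2 x = -1)))) := by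

  have key : ∀ a : ℤ, (Int.sign a = 1 ∧ 0 < a) ∨ (Int.sign a = 0 ∧ a = 0) ∨
      (Int.sign a = -1 ∧ a < 0) := by
    intro a
    rcases lt_trichotomy a 0 with h | h | h
    · exact Or.inr (Or.inr ⟨Int.sign_eq_neg_one_of_neg h, h⟩)
    · exact Or.inr (Or.inl ⟨by simp [h], h⟩)
    · exact Or.inl ⟨Int.sign_eq_one_of_pos h, h⟩
  intro g1
  refine ⟨?_, ?_, ?_, ?_⟩
  · intro x hx i
    have h1 := hx i
    have h2 := (hmap x hx).1 i
    rcases key (f1 x i - x i) with ⟨hs, hd⟩ | ⟨hs, hd⟩ | ⟨hs, hd⟩ <;>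
      simp only [g1, hs] <;> omega
  · intro a b ha hb hab
    refine ⟨fun i => ?_, (hmono a b ha hb hab).2⟩
    have hfi : f1 a i ≤ f1 b i := (hmono a b ha hb hab).1 i
    have h1 := ha i; have h2 := hb i
    have h3 := (hmap a ha).1 i; have h4 := (hmap b hb).1 i
    have hi : a i ≤ b i := hab i
    rcases key (f1 a i - a i) with ⟨hsa, hda⟩ | ⟨hsa, hda⟩ | ⟨hsa, hda⟩ <;>
      rcases key (f1 b i - b i) with ⟨hsb, hdb⟩ | ⟨hsb, hdb⟩ | ⟨hsb, hdb⟩ <;>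
      simp only [g1, hsa, hsb] <;> omega
  · intro x hx i
    rcases key (f1 x i - x i) with ⟨hs, hd⟩ | ⟨hs, hd⟩ | ⟨hs, hd⟩ <;>
      simp only [g1, hs] <;> rw [abs_le] <;> omega
  · intro x hx
    have hcoord : ∀ i, (x i ≤ g1 x i ↔ x i ≤ f1 x i) ∧ (g1 x i ≤ x i ↔ f1 x i ≤ x i) := by
      intro i
      rcases key (f1 x i - x i) with ⟨hs, hd⟩ | ⟨hs, hd⟩ | ⟨hs, hd⟩ <;>
        simp only [g1, hs] <;> omega
    constructor
    · rintro (⟨h, hf⟩ | ⟨h, hf⟩)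
      · exact Or.inl ⟨fun i => (hcoord i).1.mp (h i), hf⟩
      · exact Or.inr ⟨fun i => (hcoord i).2.mp (h i), hf⟩
    · rintro (⟨h, hf⟩ | ⟨h, hf⟩)
      · exact Or.inl ⟨fun i => (hcoord i).1.mpr (h i), hf⟩
      · exact Or.inr ⟨fun i => (hcoord i).2.mpr (h i), hf⟩
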